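/- If f : S₁ × ... × Sₙ → ℤ is order-preserving and each Gᵢ is an Sᵢ-valued well-tempered scoring game with gap_0(Gᵢ) = 0, then gap_0(f̃(G₁,...,Gₙ)) = 0, where f̃ is the extension of f to games. -/

import Mathlib

/-!
Call a well-tempered game an i-game if `R(H) ≤ L(H)` for every even-tempered subgame `H`; for a
well-tempered game, `gap₀ = 0` says exactly this. The subgames of `f̃(G)` are the games `f̃(U)` with
each `Uᵢ` a subgame of `Gᵢ`, so it suffices to show `R(f̃ U) ≤ L(f̃ U)` whenever `f̃ U` is
even-tempered and the `Uᵢ` are `Sᵢ`-valued i-games.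

This is proved by induction on `U`, together with six comparisons between `f̃ U` and the game
`f̃ U[j ↦ c]` in which the component `Uⱼ` is frozen to an integer `c` bounding `L(Uⱼ)` or `R(Uⱼ)`
from one side. Each comparison is a strategy-copying argument: a player either copies into `f̃ U`
his optimal move in `f̃ U[j ↦ c]`, or answers inside `Uⱼ`; when no other component is left to
move in, the i-game inequality for `Uⱼ` pays for the lost tempo, and `f` being order-preserving
settles the integer positions. If `Uⱼᴸ` is Left's best move in `Uⱼ` and `c = L(Uⱼ) = R(Uⱼᴸ)`, then
`R(f̃ U) ≤ R(f̃ U[j ↦ c]) ≤ R(f̃ U[j ↦ Uⱼᴸ]) ≤ L(f̃ U)`.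
-/

/-- Well-tempered scoring game trees: an integer (final score) or a position
with lists of Left and Right options. -/
inductive WT : Type where
  | int : ℤ → WT
  | node : List WT → List WT → WT

namespace WT

/-- Left options. -/
def lopts : WT → List WT
  | int _ => []
  | node L _ => L

/-- Right options. -/
def ropts : WT → List WT
  | int _ => []
  | node _ R => R

theorem sizeOf_lt_of_mem_lopts : ∀ {G g : WT}, g ∈ G.lopts → sizeOf g < sizeOf G := by
  intro G g h
  cases G with
  | int n => simp [lopts] at h
  | node L R =>
    simp only [lopts] at h
    have h1 := List.sizeOf_lt_of_mem h
    have h2 : sizeOf (WT.node L R) = 1 + sizeOf L + sizeOf R := by simp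
    omega

theorem sizeOf_lt_of_mem_ropts : ∀ {G g : WT}, g ∈ G.ropts → sizeOf g < sizeOf G := by
  intro G g h
  cases G with
  | int n => simp [ropts] at h
  | node L R =>
    simp only [ropts] at h
    have h1 := List.sizeOf_lt_of_mem h
    have h2 : sizeOf (WT.node L R) = 1 + sizeOf L + sizeOf R := by simp
    omega

/-- Disjunctive sum of two games. -/
def add (G H : WT) : WT :=
  match G, H with
  | int m, int n => int (m + n)
  | G, H =>
    node ((G.lopts.attach.map fun g => add g.1 H) ++ (H.lopts.attach.map fun h => add G h.1))
         ((G.ropts.attach.map fun g => add g.1 H) ++ (H.ropts.attach.map fun h => add G h.1))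
termination_by sizeOf G + sizeOf H
decreasing_by
  all_goals
    first
      | (have := sizeOf_lt_of_mem_lopts g.2; omega)
      | (have := sizeOf_lt_of_mem_lopts h.2; omega)
      | (have := sizeOf_lt_of_mem_ropts g.2; omega)
      | (have := sizeOf_lt_of_mem_ropts h.2; omega)

/-- Negation of a game: swap players and negate scores. -/
def neg : WT → WT
  | int n => int (-n)
  | node L R =>
    node ((WT.node L R).ropts.attach.map fun g => neg g.1)
         ((WT.node L R).lopts.attach.map fun g => neg g.1)
termination_by G => sizeOf G
decreasing_by
  all_goals
    first
      | exact sizeOf_lt_of_mem_lopts g.2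
      | exact sizeOf_lt_of_mem_ropts g.2

def lmax : List ℤ → ℤ
  | [] => 0
  | x :: xs => xs.foldl max x

def lmin : List ℤ → ℤ
  | [] => 0
  | x :: xs => xs.foldl min x

/-- The pair (left outcome, right outcome). -/
def out : WT → ℤ × ℤ
  | int n => (n, n)
  | node L R =>
    (lmax ((WT.node L R).lopts.attach.map fun g => (out g.1).2),
     lmin ((WT.node L R).ropts.attach.map fun g => (out g.1).1))
termination_by G => sizeOf G
decreasing_by
  all_goals
    first
      | exact sizeOf_lt_of_mem_lopts g.2
      | exact sizeOf_lt_of_mem_ropts g.2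

/-- Left outcome L(G): optimal score when Left moves first. -/
def Lout (G : WT) : ℤ := G.out.1

/-- Right outcome R(G): optimal score when Right moves first. -/
def Rout (G : WT) : ℤ := G.out.2

/-- `IsWT G p` : `G` is a well-tempered game of parity `p`
(`false` = even-tempered, `true` = odd-tempered). -/
inductive IsWT : WT → Bool → Prop where
  | int (n : ℤ) : IsWT (WT.int n) false
  | node {L R : List WT} {p : Bool} (hL : L ≠ []) (hR : R ≠ [])
      (hLp : ∀ g ∈ L, IsWT g p) (hRp : ∀ g ∈ R, IsWT g p) :
      IsWT (WT.node L R) (!p)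

/-- `G` is a well-tempered game (of some parity). -/
def Wt (G : WT) : Prop := ∃ p, IsWT G p

/-- Parity, computed structurally (`false` = even-tempered, `true` = odd-tempered;
agrees with `IsWT` on well-tempered games). -/
def par : WT → Bool
  | int _ => false
  | node [] _ => true
  | node (g :: _) _ => !(par g)

/-- Final score under optimal play when Left moves last. -/
def Lf (G : WT) : ℤ := if G.par then G.Lout else G.Rout

/-- Final score under optimal play when Right moves last. -/
def Rf (G : WT) : ℤ := if G.par then G.Rout else G.Lout

/-- `G ≲ H` : for every well-tempered `X`, `L(G+X) ≤ L(H+X)` and `R(G+X) ≤ R(H+X)`. -/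
def Le (G H : WT) : Prop :=
  ∀ X : WT, X.Wt → (G.add X).Lout ≤ (H.add X).Lout ∧ (G.add X).Rout ≤ (H.add X).Rout

/-- `G ≳ H`. -/
def Ge (G H : WT) : Prop := Le H G

/-- `G ≈ H` : equivalence of scoring games. -/
def Equiv (G H : WT) : Prop :=
  ∀ X : WT, X.Wt → (G.add X).Lout = (H.add X).Lout ∧ (G.add X).Rout = (H.add X).Rout

/-- `G` and `H` are well-tempered with the same parity. -/
def SamePar (G H : WT) : Prop := ∃ p, IsWT G p ∧ IsWT H p

/-- `G` takes values in `S`: every integer subgame lies in `S`. -/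
inductive Valued (S : Set ℤ) : WT → Prop where
  | int {n : ℤ} : n ∈ S → Valued S (WT.int n)
  | node {L R : List WT} : (∀ g ∈ L, Valued S g) → (∀ g ∈ R, Valued S g) →
      Valued S (WT.node L R)

/-- `Subgame H G` : `H` is a subgame of `G`. -/
inductive Subgame : WT → WT → Prop where
  | refl (G : WT) : Subgame G G
  | left {H G' : WT} {L R : List WT} : G' ∈ L → Subgame H G' → Subgame H (WT.node L R)
  | right {H G' : WT} {L R : List WT} : G' ∈ R → Subgame H G' → Subgame H (WT.node L R)

/-- `gap G p` : supremum of `R(H) - L(H)` over subgames `H` of `G` of parity `p`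
(as an element of `WithBot ℤ`; the supremum of the empty set is `⊥ = -∞`). -/
noncomputable def gap (G : WT) (p : Bool) : WithBot ℤ :=
  sSup {x : WithBot ℤ | ∃ H : WT, Subgame H G ∧ IsWT H p ∧ x = ((H.Rout - H.Lout : ℤ) : WithBot ℤ)}

/-- Heating by `t`. -/
def heat (t : ℤ) : WT → WT
  | int n => int n
  | node L R =>
    node ((WT.node L R).lopts.attach.map fun g => (WT.int t).add (heat t g.1))
         ((WT.node L R).ropts.attach.map fun g => (WT.int (-t)).add (heat t g.1))
termination_by G => sizeOf G
decreasing_by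
  all_goals
    first
      | exact sizeOf_lt_of_mem_lopts g.2
      | exact sizeOf_lt_of_mem_ropts g.2

end WT

namespace WT

def isInt : WT → Bool
  | int _ => true
  | node _ _ => false

def toInt : WT → ℤ
  | int n => n
  | node _ _ => 0

noncomputable def tupSize {n : ℕ} (G : Fin n → WT) : ℕ := ∑ i, sizeOf (G i)

theorem tupSize_update_lt {n : ℕ} (G : Fin n → WT) (i : Fin n) (g : WT)
    (h : sizeOf g < sizeOf (G i)) : tupSize (Function.update G i g) < tupSize G := by
  unfold tupSize
  have h1 : ∀ s : Fin n → WT,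
      ∑ j, sizeOf (s j) = sizeOf (s i) + ∑ j ∈ Finset.univ.erase i, sizeOf (s j) :=
    fun s => (Finset.add_sum_erase _ _ (Finset.mem_univ i)).symm
  rw [h1, h1]
  have h2 : ∑ j ∈ Finset.univ.erase i, sizeOf (Function.update G i g j) =
      ∑ j ∈ Finset.univ.erase i, sizeOf (G j) :=
    Finset.sum_congr rfl fun j hj => by
      rw [Function.update_of_ne (Finset.ne_of_mem_erase hj)]
  rw [h2, Function.update_self]
  omega

/-- The extension of `f : ℤⁿ → ℤ` to games: play the `n` games in parallel and combine
the final scores with `f`; a move is a move in exactly one component. -/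
def fextn {n : ℕ} (f : (Fin n → ℤ) → ℤ) (G : Fin n → WT) : WT :=
  if h : ∀ i, (G i).isInt = true then int (f fun i => (G i).toInt)
  else
    node
      ((List.finRange n).flatMap fun i =>
        (G i).lopts.attach.map fun g => fextn f (Function.update G i g.1))
      ((List.finRange n).flatMap fun i =>
        (G i).ropts.attach.map fun g => fextn f (Function.update G i g.1))
termination_by tupSize G
decreasing_by
  all_goals
    first
      | exact tupSize_update_lt G i g.1 (sizeOf_lt_of_mem_lopts g.2)
      | exact tupSize_update_lt G i g.1 (sizeOf_lt_of_mem_ropts g.2)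

end WT

namespace WT

open Function

section Games

variable {G g H : WT} {p q : Bool} {S : Set ℤ}

@[simp] theorem lopts_int (m : ℤ) : (int m).lopts = [] := rfl

@[simp] theorem ropts_int (m : ℤ) : (int m).ropts = [] := rfl

@[simp] theorem lopts_node (L R : List WT) : (node L R).lopts = L := rfl

@[simp] theorem ropts_node (L R : List WT) : (node L R).ropts = R := rfl

theorem lopts_eq_nil_of_isInt (h : G.isInt = true) : G.lopts = [] := by
  cases G <;> simp_all [isInt]

theorem ropts_eq_nil_of_isInt (h : G.isInt = true) : G.ropts = [] := by
  cases G <;> simp_all [isInt]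

theorem lmax_eq_max {l : List ℤ} (hl : l ≠ []) : lmax l = l.max hl := by
  cases l with
  | nil => contradiction
  | cons => rfl

theorem lmin_eq_min {l : List ℤ} (hl : l ≠ []) : lmin l = l.min hl := by
  cases l with
  | nil => contradiction
  | cons => rfl

@[simp] theorem Lout_int (m : ℤ) : (int m).Lout = m := by
  rw [Lout, out]

@[simp] theorem Rout_int (m : ℤ) : (int m).Rout = m := by
  rw [Rout, out]

theorem Lout_node (L R : List WT) : (node L R).Lout = lmax (L.map Rout) := by
  rw [Lout, out]
  simp only [lopts, List.map_attach_eq_pmap, List.pmap_eq_map]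
  rfl

theorem Rout_node (L R : List WT) : (node L R).Rout = lmin (R.map Lout) := by
  rw [Rout, out]
  simp only [ropts, List.map_attach_eq_pmap, List.pmap_eq_map]
  rfl

theorem le_Lout {G g : WT} (hg : g ∈ G.lopts) : g.Rout ≤ G.Lout := by
  cases G with
  | int => simp at hg
  | node L R =>
    rw [Lout_node, lmax_eq_max (by simpa using List.ne_nil_of_mem hg)]
    exact List.le_max_of_mem (List.mem_map_of_mem hg)

theorem Lout_le {b : ℤ} (hG : G.lopts ≠ []) (h : ∀ g ∈ G.lopts, g.Rout ≤ b) :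
    G.Lout ≤ b := by
  cases G with
  | int => simp at hG
  | node L R =>
    rw [Lout_node, lmax_eq_max (by simpa using hG), List.max_le_iff]
    simpa using h

theorem exists_Lout_eq (hG : G.lopts ≠ []) : ∃ g ∈ G.lopts, G.Lout = g.Rout := by
  cases G with
  | int => simp at hG
  | node L R =>
    have hne : L.map Rout ≠ [] := by simpa using hG
    simpa [Lout_node, lmax_eq_max hne, eq_comm] using List.max_mem hne

theorem Rout_le {G g : WT} (hg : g ∈ G.ropts) : G.Rout ≤ g.Lout := by
  cases G with
  | int => simp at hg
  | node L R =>
    rw [Rout_node, lmin_eq_min (by simpa using List.ne_nil_of_mem hg)]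
    exact List.min_le_of_mem (List.mem_map_of_mem hg)

theorem le_Rout {b : ℤ} (hG : G.ropts ≠ []) (h : ∀ g ∈ G.ropts, b ≤ g.Lout) :
    b ≤ G.Rout := by
  cases G with
  | int => simp at hG
  | node L R =>
    rw [Rout_node, lmin_eq_min (by simpa using hG), List.le_min_iff]
    simpa using h

theorem exists_Rout_eq (hG : G.ropts ≠ []) : ∃ g ∈ G.ropts, G.Rout = g.Lout := by
  cases G with
  | int => simp at hG
  | node L R =>
    have hne : R.map Lout ≠ [] := by simpa using hG
    simpa [Rout_node, lmin_eq_min hne, eq_comm] using List.min_mem hne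

theorem IsWT.par_eq (h : IsWT G p) : G.par = p := by
  induction h with
  | int => rfl
  | @node L R q hL _ _ _ ih _ =>
    cases L with
    | nil => contradiction
    | cons g _ => simp [par, ih g List.mem_cons_self]

theorem IsWT.unique (h₁ : IsWT G p) (h₂ : IsWT G q) : p = q :=
  h₁.par_eq.symm.trans h₂.par_eq

theorem IsWT.of_mem_lopts (h : IsWT G p) (hg : g ∈ G.lopts) : IsWT g !p := by
  cases h with
  | int => simp at hg
  | node _ _ hl _ => simpa using hl g hg

theorem IsWT.of_mem_ropts (h : IsWT G p) (hg : g ∈ G.ropts) : IsWT g !p := by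
  cases h with
  | int => simp at hg
  | node _ _ _ hr => simpa using hr g hg

theorem IsWT.eq_int_or_opts_ne_nil (h : IsWT G p) :
    (∃ m, G = WT.int m) ∨ (G.lopts ≠ [] ∧ G.ropts ≠ []) := by
  cases h with
  | int m => exact Or.inl ⟨m, rfl⟩
  | node hL hR _ _ => exact Or.inr ⟨hL, hR⟩

theorem IsWT.opts_ne_nil_of_odd (h : IsWT G true) : G.lopts ≠ [] ∧ G.ropts ≠ [] := by
  rcases h.eq_int_or_opts_ne_nil with ⟨m, rfl⟩ | hne
  · exact absurd h.par_eq (by simp [par])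
  · exact hne

theorem isWT_of_opts (hL : G.lopts ≠ []) (hR : G.ropts ≠ [])
    (hl : ∀ g ∈ G.lopts, IsWT g p) (hr : ∀ g ∈ G.ropts, IsWT g p) : IsWT G !p := by
  cases G with
  | int => simp at hL
  | node L R => exact IsWT.node hL hR hl hr

theorem Wt.of_mem_lopts (h : Wt G) (hg : g ∈ G.lopts) : Wt g :=
  let ⟨_, hp⟩ := h; ⟨_, hp.of_mem_lopts hg⟩

theorem Wt.of_mem_ropts (h : Wt G) (hg : g ∈ G.ropts) : Wt g :=
  let ⟨_, hp⟩ := h; ⟨_, hp.of_mem_ropts hg⟩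

theorem Wt.eq_int_or_opts_ne_nil (h : Wt G) :
    (∃ m, G = WT.int m) ∨ (G.lopts ≠ [] ∧ G.ropts ≠ []) :=
  h.choose_spec.eq_int_or_opts_ne_nil

theorem Wt.opts_ne_nil_of_isInt_eq_false (h : Wt G) (hG : G.isInt = false) :
    G.lopts ≠ [] ∧ G.ropts ≠ [] :=
  h.eq_int_or_opts_ne_nil.resolve_left fun ⟨m, hm⟩ => by simp [hm, isInt] at hG

theorem Wt.isInt_of_lopts_eq_nil (h : Wt G) (hL : G.lopts = []) : G.isInt = true := by
  rcases h.eq_int_or_opts_ne_nil with ⟨m, rfl⟩ | ⟨hL', _⟩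
  · rfl
  · exact absurd hL hL'

theorem Wt.isInt_of_ropts_eq_nil (h : Wt G) (hR : G.ropts = []) : G.isInt = true := by
  rcases h.eq_int_or_opts_ne_nil with ⟨m, rfl⟩ | ⟨_, hR'⟩
  · rfl
  · exact absurd hR hR'

theorem Subgame.trans {A B C : WT} (h₁ : Subgame A B) (h₂ : Subgame B C) : Subgame A C := by
  induction h₂ with
  | refl => exact h₁
  | left hmem _ ih => exact Subgame.left hmem ih
  | right hmem _ ih => exact Subgame.right hmem ih

theorem Subgame.of_mem_lopts (hg : g ∈ G.lopts) : Subgame g G := by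
  cases G with
  | int => simp at hg
  | node L R => exact Subgame.left hg (Subgame.refl g)

theorem Subgame.of_mem_ropts (hg : g ∈ G.ropts) : Subgame g G := by
  cases G with
  | int => simp at hg
  | node L R => exact Subgame.right hg (Subgame.refl g)

theorem Wt.of_subgame (h : Wt G) (hs : Subgame H G) : Wt H := by
  induction hs with
  | refl => exact h
  | left hmem _ ih => exact ih (Wt.of_mem_lopts h hmem)
  | right hmem _ ih => exact ih (Wt.of_mem_ropts h hmem)

theorem Valued.of_subgame (h : Valued S G) (hs : Subgame H G) : Valued S H := by
  induction hs with
  | refl => exact h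
  | left hmem _ ih => cases h with | node hl _ => exact ih (hl _ hmem)
  | right hmem _ ih => cases h with | node _ hr => exact ih (hr _ hmem)

@[simp] theorem valued_int_iff {m : ℤ} : Valued S (int m) ↔ m ∈ S :=
  ⟨fun h => by cases h with | int hm => exact hm, Valued.int⟩

theorem Valued.toInt_mem (h : Valued S G) (hG : G.isInt = true) : G.toInt ∈ S := by
  cases h with
  | int hm => exact hm
  | node => simp [isInt] at hG

theorem Valued.out_mem (hv : Valued S G) (hw : Wt G) : G.Lout ∈ S ∧ G.Rout ∈ S := by
  obtain ⟨_, hw⟩ := hw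
  induction hw with
  | int m => simpa using hv
  | @node L R _ hL hR _ _ ihL ihR =>
    cases hv with
    | node hl hr =>
      obtain ⟨l, hl', hEl⟩ := exists_Lout_eq (G := WT.node L R) hL
      obtain ⟨r, hr', hEr⟩ := exists_Rout_eq (G := WT.node L R) hR
      exact ⟨hEl ▸ (ihL l hl' (hl l hl')).2, hEr ▸ (ihR r hr' (hr r hr')).1⟩

theorem finite_setOf_subgame (h : Wt G) : {H | Subgame H G}.Finite := by
  obtain ⟨p, h⟩ := h
  induction h with
  | int m =>
    refine (Set.finite_singleton (int m)).subset fun H hH => ?_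
    cases hH
    rfl
  | @node L R _ _ _ _ _ ihL ihR =>
    refine ((Set.finite_singleton (node L R)).union
      ((L.finite_toSet.biUnion ihL).union (R.finite_toSet.biUnion ihR))).subset fun H hH => ?_
    cases hH with
    | refl => exact Or.inl rfl
    | left hmem hs => exact Or.inr (Or.inl (Set.mem_biUnion hmem hs))
    | right hmem hs => exact Or.inr (Or.inr (Set.mem_biUnion hmem hs))

theorem rout_le_lout_of_gap_eq_zero (hG : Wt G) (h : G.gap false = ((0 : ℤ) : WithBot ℤ))
    (hs : Subgame H G) (he : IsWT H false) : H.Rout ≤ H.Lout := by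
  have hbdd : BddAbove {x : WithBot ℤ | ∃ H : WT, Subgame H G ∧ IsWT H false ∧
      x = ((H.Rout - H.Lout : ℤ) : WithBot ℤ)} := by
    refine (((finite_setOf_subgame hG).image
      fun H : WT => ((H.Rout - H.Lout : ℤ) : WithBot ℤ)).subset ?_).bddAbove
    rintro _ ⟨H, hs, _, rfl⟩
    exact ⟨H, hs, rfl⟩
  have := le_csSup hbdd ⟨H, hs, he, rfl⟩
  rw [← gap, h, WithBot.coe_le_coe] at this
  omega

theorem gap_eq_zero {m : ℤ} (hm : Subgame (int m) G)
    (h : ∀ H, Subgame H G → IsWT H false → H.Rout ≤ H.Lout) :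
    G.gap false = ((0 : ℤ) : WithBot ℤ) := by
  rw [gap]
  refine IsGreatest.csSup_eq ⟨?_, ?_⟩
  · exact ⟨int m, hm, IsWT.int m, by simp⟩
  rintro _ ⟨H, hs, he, rfl⟩
  exact WithBot.coe_le_coe.2 (by linarith [h H hs he])

def IsIGame (G : WT) : Prop := G.Wt ∧ ∀ H, Subgame H G → IsWT H false → H.Rout ≤ H.Lout

theorem IsIGame.of_subgame (h : IsIGame G) (hs : Subgame H G) : IsIGame H :=
  ⟨h.1.of_subgame hs, fun K hK he => h.2 K (hK.trans hs) he⟩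

theorem IsIGame.rout_le_lout (h : IsIGame G) (he : IsWT G false) : G.Rout ≤ G.Lout :=
  h.2 G (Subgame.refl G) he

end Games

section Extension

variable {n : ℕ} {S : Fin n → Set ℤ} {f : (Fin n → ℤ) → ℤ} {T : Fin n → WT} {i j : Fin n}
  {g x H : WT} {p : Bool} {c : ℤ}

theorem fextn_of_forall_isInt (h : ∀ i, (T i).isInt = true) :
    fextn f T = int (f fun i => (T i).toInt) := by
  rw [fextn, dif_pos h]

theorem mem_lopts_fextn :
    x ∈ (fextn f T).lopts ↔ ∃ i, ∃ g ∈ (T i).lopts, x = fextn f (update T i g) := by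
  by_cases h : ∀ i, (T i).isInt = true
  · simp [fextn_of_forall_isInt h, lopts_eq_nil_of_isInt (h _)]
  · rw [fextn, dif_neg h]
    simp [eq_comm]

theorem mem_ropts_fextn :
    x ∈ (fextn f T).ropts ↔ ∃ i, ∃ g ∈ (T i).ropts, x = fextn f (update T i g) := by
  by_cases h : ∀ i, (T i).isInt = true
  · simp [fextn_of_forall_isInt h, ropts_eq_nil_of_isInt (h _)]
  · rw [fextn, dif_neg h]
    simp [eq_comm]

theorem fextn_update_mem_lopts (hg : g ∈ (T i).lopts) :
    fextn f (update T i g) ∈ (fextn f T).lopts :=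
  mem_lopts_fextn.2 ⟨i, g, hg, rfl⟩

theorem fextn_update_mem_ropts (hg : g ∈ (T i).ropts) :
    fextn f (update T i g) ∈ (fextn f T).ropts :=
  mem_ropts_fextn.2 ⟨i, g, hg, rfl⟩

theorem mem_lopts_fextn_update_int :
    x ∈ (fextn f (update T j (int c))).lopts ↔
      ∃ i ≠ j, ∃ g ∈ (T i).lopts, x = fextn f (update (update T i g) j (int c)) := by
  rw [mem_lopts_fextn]
  constructor
  · rintro ⟨i, g, hg, rfl⟩
    have hij : i ≠ j := by rintro rfl; simp at hg
    rw [update_of_ne hij] at hg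
    exact ⟨i, hij, g, hg, by rw [update_comm hij]⟩
  · rintro ⟨i, hij, g, hg, rfl⟩
    exact ⟨i, g, by rwa [update_of_ne hij], by rw [update_comm hij]⟩

theorem mem_ropts_fextn_update_int :
    x ∈ (fextn f (update T j (int c))).ropts ↔
      ∃ i ≠ j, ∃ g ∈ (T i).ropts, x = fextn f (update (update T i g) j (int c)) := by
  rw [mem_ropts_fextn]
  constructor
  · rintro ⟨i, g, hg, rfl⟩
    have hij : i ≠ j := by rintro rfl; simp at hg
    rw [update_of_ne hij] at hg
    exact ⟨i, hij, g, hg, by rw [update_comm hij]⟩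
  · rintro ⟨i, hij, g, hg, rfl⟩
    exact ⟨i, g, by rwa [update_of_ne hij], by rw [update_comm hij]⟩

theorem isWT_fextn_of_forall_ne_isInt (hT : ∀ i ≠ j, (T i).isInt = true)
    (hX : IsWT (T j) p) : IsWT (fextn f T) p := by
  generalize hX' : T j = X at hX
  induction hX generalizing T with
  | int m =>
    rw [fextn_of_forall_isInt]
    · exact IsWT.int _
    · intro i
      by_cases hij : i = j
      · subst hij; rw [hX']; rfl
      · exact hT i hij
  | @node L R q hL hR _ _ ihL ihR =>
    have hmove : ∀ i, ∀ g, (g ∈ (T i).lopts ∨ g ∈ (T i).ropts) → i = j := by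
      intro i g hg
      by_contra hij
      simp [lopts_eq_nil_of_isInt (hT i hij), ropts_eq_nil_of_isInt (hT i hij)] at hg
    have hrest : ∀ g, ∀ i ≠ j, (update T j g i).isInt = true :=
      fun g i hij => by rw [update_of_ne hij]; exact hT i hij
    apply isWT_of_opts
    · obtain ⟨g, hg⟩ := List.exists_mem_of_ne_nil L hL
      exact List.ne_nil_of_mem (fextn_update_mem_lopts (i := j) (by rwa [hX']))
    · obtain ⟨g, hg⟩ := List.exists_mem_of_ne_nil R hR
      exact List.ne_nil_of_mem (fextn_update_mem_ropts (i := j) (by rwa [hX']))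
    · intro x hx
      obtain ⟨i, g, hg, rfl⟩ := mem_lopts_fextn.1 hx
      obtain rfl := hmove i g (Or.inl hg)
      rw [hX'] at hg
      exact ihL g hg (hrest g) (update_self ..)
    · intro x hx
      obtain ⟨i, g, hg, rfl⟩ := mem_ropts_fextn.1 hx
      obtain rfl := hmove i g (Or.inr hg)
      rw [hX'] at hg
      exact ihR g hg (hrest g) (update_self ..)

theorem isWT_of_isWT_fextn (hT : ∀ i ≠ j, (T i).isInt = true) (hX : Wt (T j))
    (he : IsWT (fextn f T) p) : IsWT (T j) p := by
  obtain ⟨q, hq⟩ := hX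
  rwa [(isWT_fextn_of_forall_ne_isInt hT hq).unique he] at hq

theorem isInt_update_int (hT : ∀ i ≠ j, (T i).isInt = true) (c : ℤ) :
    ∀ i, (update T j (int c) i).isInt = true := by
  intro i
  by_cases hij : i = j
  · subst hij; rw [update_self]; rfl
  · rw [update_of_ne hij]; exact hT i hij

theorem toInt_update_int (c : ℤ) :
    (fun i => (update T j (int c) i).toInt) = update (fun i => (T i).toInt) j c := by
  funext i
  by_cases hij : i = j
  · subst hij; simp [toInt]
  · simp [update_of_ne hij]

theorem Lout_fextn_update_int_eq_Rout (hT : ∀ i ≠ j, (T i).isInt = true) :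
    (fextn f (update T j (int c))).Lout = (fextn f (update T j (int c))).Rout := by
  rw [fextn_of_forall_isInt (isInt_update_int hT c), Lout_int, Rout_int]

theorem exists_int_subgame_fextn (hT : ∀ i, Wt (T i)) : ∃ m, Subgame (int m) (fextn f T) := by
  induction hs : tupSize T using Nat.strong_induction_on generalizing T with
  | _ s ih =>
  by_cases h : ∀ i, (T i).isInt = true
  · exact ⟨_, by rw [fextn_of_forall_isInt h]; exact Subgame.refl _⟩
  · obtain ⟨i, hi⟩ : ∃ i, (T i).isInt = false := by simpa using h
    obtain ⟨g, hg⟩ := List.exists_mem_of_ne_nil _ ((hT i).opts_ne_nil_of_isInt_eq_false hi).1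
    obtain ⟨m, hm⟩ := ih _ (hs ▸ tupSize_update_lt T i g (sizeOf_lt_of_mem_lopts hg))
      ((forall_update_iff T fun _ G => Wt G).2 ⟨(hT i).of_mem_lopts hg, fun k _ => hT k⟩) rfl
    exact ⟨m, hm.trans (Subgame.of_mem_lopts (fextn_update_mem_lopts hg))⟩

theorem exists_eq_fextn_of_subgame {K : WT} (hs : Subgame H K) :
    ∀ T, K = fextn f T → ∃ U : Fin n → WT, (∀ i, Subgame (U i) (T i)) ∧ H = fextn f U := by
  have step : ∀ {U T : Fin n → WT} {i g}, Subgame g (T i) →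
      (∀ k, Subgame (U k) (update T i g k)) → ∀ k, Subgame (U k) (T k) := by
    intro U T i g hg hU k
    obtain ⟨hUi, hU⟩ := (forall_update_iff T fun k G => Subgame (U k) G).1 hU
    by_cases hk : k = i
    · subst hk; exact hUi.trans hg
    · exact hU k hk
  induction hs with
  | refl => exact fun T hT => ⟨T, fun i => Subgame.refl _, hT⟩
  | left hmem _ ih =>
    intro T hT
    obtain ⟨i, g, hg, rfl⟩ := mem_lopts_fextn.1 (by rw [← hT]; exact hmem)
    obtain ⟨U, hU, rfl⟩ := ih _ rfl
    exact ⟨U, step (Subgame.of_mem_lopts hg) hU, rfl⟩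
  | right hmem _ ih =>
    intro T hT
    obtain ⟨i, g, hg, rfl⟩ := mem_ropts_fextn.1 (by rw [← hT]; exact hmem)
    obtain ⟨U, hU, rfl⟩ := ih _ rfl
    exact ⟨U, step (Subgame.of_mem_ropts hg) hU, rfl⟩

def Admissible (S : Fin n → Set ℤ) (T : Fin n → WT) : Prop :=
  ∀ i, (T i).IsIGame ∧ (T i).Valued (S i)

theorem Admissible.isIGame (hT : Admissible S T) (i : Fin n) : (T i).IsIGame := (hT i).1

theorem Admissible.wt (hT : Admissible S T) (i : Fin n) : (T i).Wt := (hT i).1.1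

theorem Admissible.valued (hT : Admissible S T) (i : Fin n) : (T i).Valued (S i) := (hT i).2

theorem Admissible.update (hT : Admissible S T) (hg : Subgame g (T i)) :
    Admissible S (update T i g) :=
  (forall_update_iff T fun k G => G.IsIGame ∧ G.Valued (S k)).2
    ⟨⟨(hT.isIGame i).of_subgame hg, (hT.valued i).of_subgame hg⟩, fun k _ => hT k⟩

theorem Admissible.subgames {U : Fin n → WT} (hT : Admissible S T)
    (hU : ∀ i, Subgame (U i) (T i)) : Admissible S U :=
  fun i => ⟨(hT.isIGame i).of_subgame (hU i), (hT.valued i).of_subgame (hU i)⟩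

theorem fextn_update_int_mono (hf : MonotoneOn f (Set.univ.pi S)) (hw : ∀ i, Wt (T i))
    (hv : ∀ i, Valued (S i) (T i)) {a b : ℤ} (ha : a ∈ S j) (hb : b ∈ S j) (hab : a ≤ b) :
    (fextn f (update T j (int a))).Lout ≤ (fextn f (update T j (int b))).Lout ∧
      (fextn f (update T j (int a))).Rout ≤ (fextn f (update T j (int b))).Rout := by
  induction hs : tupSize T using Nat.strong_induction_on generalizing T with
  | _ s ih =>
  have ih' : ∀ i ≠ j, ∀ g, Subgame g (T i) → sizeOf g < sizeOf (T i) →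
      (fextn f (update (update T i g) j (int a))).Lout ≤
        (fextn f (update (update T i g) j (int b))).Lout ∧
      (fextn f (update (update T i g) j (int a))).Rout ≤
        (fextn f (update (update T i g) j (int b))).Rout :=
    fun i _ g hg hlt => ih _ (hs ▸ tupSize_update_lt T i g hlt)
      ((forall_update_iff T fun _ G => Wt G).2 ⟨(hw i).of_subgame hg, fun k _ => hw k⟩)
      ((forall_update_iff T fun k G => Valued (S k) G).2 ⟨(hv i).of_subgame hg, fun k _ => hv k⟩)
      rfl
  by_cases hrest : ∀ i ≠ j, (T i).isInt = true
  · have hmem : ∀ c ∈ S j, update (fun i => (T i).toInt) j c ∈ Set.univ.pi S :=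
      fun c hc => Set.update_mem_pi_iff.2
        ⟨fun i hi => (hv i).toInt_mem (hrest i (by simpa using hi)), fun _ => hc⟩
    have hle := hf (hmem a ha) (hmem b hb) (update_le_update_iff'.2 hab)
    rw [fextn_of_forall_isInt (isInt_update_int hrest a),
      fextn_of_forall_isInt (isInt_update_int hrest b), toInt_update_int, toInt_update_int]
    simpa using hle
  · obtain ⟨i, hij, hi⟩ := by simpa using hrest
    obtain ⟨hL, hR⟩ := (hw i).opts_ne_nil_of_isInt_eq_false hi
    obtain ⟨l, hl⟩ := List.exists_mem_of_ne_nil _ hL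
    obtain ⟨r, hr⟩ := List.exists_mem_of_ne_nil _ hR
    constructor
    · refine Lout_le (List.ne_nil_of_mem
        (mem_lopts_fextn_update_int.2 ⟨i, hij, l, hl, rfl⟩)) fun x hx => ?_
      obtain ⟨k, hkj, g, hg, rfl⟩ := mem_lopts_fextn_update_int.1 hx
      exact (ih' k hkj g (Subgame.of_mem_lopts hg) (sizeOf_lt_of_mem_lopts hg)).2.trans
        (le_Lout (mem_lopts_fextn_update_int.2 ⟨k, hkj, g, hg, rfl⟩))
    · refine le_Rout (List.ne_nil_of_mem
        (mem_ropts_fextn_update_int.2 ⟨i, hij, r, hr, rfl⟩)) fun x hx => ?_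
      obtain ⟨k, hkj, g, hg, rfl⟩ := mem_ropts_fextn_update_int.1 hx
      exact (Rout_le (mem_ropts_fextn_update_int.2 ⟨k, hkj, g, hg, rfl⟩)).trans
        (ih' k hkj g (Subgame.of_mem_ropts hg) (sizeOf_lt_of_mem_ropts hg)).1

structure TempoBounds (S : Fin n → Set ℤ) (f : (Fin n → ℤ) → ℤ) (T : Fin n → WT) : Prop where
  rout_le_rout_of_lout_le : ∀ j c, c ∈ S j → (T j).Lout ≤ c → IsWT (fextn f T) false →
    (fextn f T).Rout ≤ (fextn f (update T j (int c))).Rout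
  lout_le_lout_of_lout_le : ∀ j c, c ∈ S j → (T j).Lout ≤ c → IsWT (fextn f T) true →
    (fextn f T).Lout ≤ (fextn f (update T j (int c))).Lout
  rout_le_lout_of_rout_le : ∀ j c, c ∈ S j → (T j).Rout ≤ c → IsWT (fextn f T) false →
    (fextn f T).Rout ≤ (fextn f (update T j (int c))).Lout
  lout_le_lout_of_le_rout : ∀ j c, c ∈ S j → c ≤ (T j).Rout → IsWT (fextn f T) false →
    (fextn f (update T j (int c))).Lout ≤ (fextn f T).Lout
  rout_le_rout_of_le_rout : ∀ j c, c ∈ S j → c ≤ (T j).Rout → IsWT (fextn f T) true →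
    (fextn f (update T j (int c))).Rout ≤ (fextn f T).Rout
  rout_le_lout_of_le_lout : ∀ j c, c ∈ S j → c ≤ (T j).Lout → IsWT (fextn f T) false →
    (fextn f (update T j (int c))).Rout ≤ (fextn f T).Lout
  rout_le_lout : IsWT (fextn f T) false → (fextn f T).Rout ≤ (fextn f T).Lout

def TempoBoundsBelow (S : Fin n → Set ℤ) (f : (Fin n → ℤ) → ℤ) (T : Fin n → WT) : Prop :=
  ∀ T', tupSize T' < tupSize T → Admissible S T' → TempoBounds S f T'

theorem TempoBoundsBelow.update_lopts (ih : TempoBoundsBelow S f T) (hT : Admissible S T)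
    (hg : g ∈ (T i).lopts) : TempoBounds S f (update T i g) :=
  ih _ (tupSize_update_lt T i g (sizeOf_lt_of_mem_lopts hg)) (hT.update (.of_mem_lopts hg))

theorem TempoBoundsBelow.update_ropts (ih : TempoBoundsBelow S f T) (hT : Admissible S T)
    (hg : g ∈ (T i).ropts) : TempoBounds S f (update T i g) :=
  ih _ (tupSize_update_lt T i g (sizeOf_lt_of_mem_ropts hg)) (hT.update (.of_mem_ropts hg))

theorem rout_le_rout_of_lout_le (hf : MonotoneOn f (Set.univ.pi S)) (hT : Admissible S T)
    (ih : TempoBoundsBelow S f T) (hc : c ∈ S j) (hX : (T j).Lout ≤ c)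
    (he : IsWT (fextn f T) false) :
    (fextn f T).Rout ≤ (fextn f (update T j (int c))).Rout := by
  rcases (hT.wt j).eq_int_or_opts_ne_nil with ⟨d, hd⟩ | ⟨_, hXR⟩
  · have := (fextn_update_int_mono hf hT.wt hT.valued (by simpa [hd] using hT.valued j) hc
      (by simpa [hd] using hX)).2
    rwa [← hd, update_eq_self] at this
  by_cases hrest : ∃ i ≠ j, (T i).ropts ≠ []
  · -- Right copies his optimal move in `fextn f (update T j (int c))`.
    obtain ⟨i, hij, hi⟩ := hrest
    obtain ⟨g₀, hg₀⟩ := List.exists_mem_of_ne_nil _ hi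
    obtain ⟨x, hx, hEq⟩ := exists_Rout_eq (List.ne_nil_of_mem
      (mem_ropts_fextn_update_int.2 ⟨i, hij, g₀, hg₀, rfl⟩))
    obtain ⟨i, hij, g, hg, rfl⟩ := mem_ropts_fextn_update_int.1 hx
    rw [hEq]
    exact (Rout_le (fextn_update_mem_ropts hg)).trans
      ((ih.update_ropts hT hg).lout_le_lout_of_lout_le j c hc
        (by rwa [update_of_ne hij.symm]) (he.of_mem_ropts (fextn_update_mem_ropts hg)))
  · -- Only `T j` is left to move in, so it is even-tempered and, as an i-game, has
    -- `R(T j) ≤ L(T j) ≤ c`: Right moves there.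
    push Not at hrest
    have hint : ∀ i ≠ j, (T i).isInt = true :=
      fun i hij => (hT.wt i).isInt_of_ropts_eq_nil (hrest i hij)
    obtain ⟨r, hr, hEq⟩ := exists_Rout_eq hXR
    have hrc : r.Lout ≤ c :=
      hEq ▸ ((hT.isIGame j).rout_le_lout (isWT_of_isWT_fextn hint (hT.wt j) he)).trans hX
    have := (ih.update_ropts hT hr).lout_le_lout_of_lout_le j c hc (by rwa [update_self])
      (he.of_mem_ropts (fextn_update_mem_ropts hr))
    rw [update_idem] at this
    exact (Rout_le (fextn_update_mem_ropts hr)).trans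
      (this.trans (Lout_fextn_update_int_eq_Rout hint).le)

theorem lout_le_lout_of_lout_le (hT : Admissible S T) (ih : TempoBoundsBelow S f T)
    (hc : c ∈ S j) (hX : (T j).Lout ≤ c) (he : IsWT (fextn f T) true) :
    (fextn f T).Lout ≤ (fextn f (update T j (int c))).Lout := by
  refine Lout_le he.opts_ne_nil_of_odd.1 fun x hx => ?_
  obtain ⟨i, g, hg, rfl⟩ := mem_lopts_fextn.1 hx
  by_cases hij : i = j
  · subst hij
    have := (ih.update_lopts hT hg).rout_le_lout_of_rout_le i c hc
      (by rw [update_self]; exact (le_Lout hg).trans hX) (he.of_mem_lopts hx)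
    rwa [update_idem] at this
  · exact ((ih.update_lopts hT hg).rout_le_rout_of_lout_le j c hc
      (by rwa [update_of_ne (Ne.symm hij)]) (he.of_mem_lopts hx)).trans
      (le_Lout (mem_lopts_fextn_update_int.2 ⟨i, hij, g, hg, rfl⟩))

theorem rout_le_lout_of_rout_le (hf : MonotoneOn f (Set.univ.pi S)) (hT : Admissible S T)
    (ih : TempoBoundsBelow S f T)
    (hPE : IsWT (fextn f T) false → (fextn f T).Rout ≤ (fextn f T).Lout)
    (hc : c ∈ S j) (hX : (T j).Rout ≤ c) (he : IsWT (fextn f T) false) :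
    (fextn f T).Rout ≤ (fextn f (update T j (int c))).Lout := by
  rcases (hT.wt j).eq_int_or_opts_ne_nil with ⟨d, hd⟩ | ⟨_, hXR⟩
  · have := (fextn_update_int_mono hf hT.wt hT.valued (by simpa [hd] using hT.valued j) hc
      (by simpa [hd] using hX)).1
    rw [← hd, update_eq_self] at this
    exact (hPE he).trans this
  · obtain ⟨r, hr, hEq⟩ := exists_Rout_eq hXR
    have := (ih.update_ropts hT hr).lout_le_lout_of_lout_le j c hc
      (by rw [update_self, ← hEq]; exact hX) (he.of_mem_ropts (fextn_update_mem_ropts hr))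
    rw [update_idem] at this
    exact (Rout_le (fextn_update_mem_ropts hr)).trans this

theorem lout_le_lout_of_le_rout (hf : MonotoneOn f (Set.univ.pi S)) (hT : Admissible S T)
    (ih : TempoBoundsBelow S f T) (hc : c ∈ S j) (hX : c ≤ (T j).Rout)
    (he : IsWT (fextn f T) false) :
    (fextn f (update T j (int c))).Lout ≤ (fextn f T).Lout := by
  rcases (hT.wt j).eq_int_or_opts_ne_nil with ⟨d, hd⟩ | ⟨hXL, _⟩
  · have := (fextn_update_int_mono hf hT.wt hT.valued hc (by simpa [hd] using hT.valued j)
      (by simpa [hd] using hX)).1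
    rwa [← hd, update_eq_self] at this
  by_cases hrest : ∃ i ≠ j, (T i).lopts ≠ []
  · -- Left copies his optimal move in `fextn f (update T j (int c))`.
    obtain ⟨i, hij, hi⟩ := hrest
    obtain ⟨g₀, hg₀⟩ := List.exists_mem_of_ne_nil _ hi
    obtain ⟨x, hx, hEq⟩ := exists_Lout_eq (List.ne_nil_of_mem
      (mem_lopts_fextn_update_int.2 ⟨i, hij, g₀, hg₀, rfl⟩))
    obtain ⟨i, hij, g, hg, rfl⟩ := mem_lopts_fextn_update_int.1 hx
    rw [hEq]
    exact ((ih.update_lopts hT hg).rout_le_rout_of_le_rout j c hc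
        (by rwa [update_of_ne hij.symm]) (he.of_mem_lopts (fextn_update_mem_lopts hg))).trans
      (le_Lout (fextn_update_mem_lopts hg))
  · -- Only `T j` is left to move in, so it is even-tempered and, as an i-game, has
    -- `c ≤ R(T j) ≤ L(T j)`: Left moves there.
    push Not at hrest
    have hint : ∀ i ≠ j, (T i).isInt = true :=
      fun i hij => (hT.wt i).isInt_of_lopts_eq_nil (hrest i hij)
    obtain ⟨l, hl, hEq⟩ := exists_Lout_eq hXL
    have hcl : c ≤ l.Rout :=
      hEq ▸ hX.trans ((hT.isIGame j).rout_le_lout (isWT_of_isWT_fextn hint (hT.wt j) he))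
    have := (ih.update_lopts hT hl).rout_le_rout_of_le_rout j c hc (by rwa [update_self])
      (he.of_mem_lopts (fextn_update_mem_lopts hl))
    rw [update_idem] at this
    exact (Lout_fextn_update_int_eq_Rout hint).le.trans
      (this.trans (le_Lout (fextn_update_mem_lopts hl)))

theorem rout_le_rout_of_le_rout (hT : Admissible S T) (ih : TempoBoundsBelow S f T)
    (hc : c ∈ S j) (hX : c ≤ (T j).Rout) (he : IsWT (fextn f T) true) :
    (fextn f (update T j (int c))).Rout ≤ (fextn f T).Rout := by
  refine le_Rout he.opts_ne_nil_of_odd.2 fun x hx => ?_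
  obtain ⟨i, g, hg, rfl⟩ := mem_ropts_fextn.1 hx
  by_cases hij : i = j
  · subst hij
    have := (ih.update_ropts hT hg).rout_le_lout_of_le_lout i c hc
      (by rw [update_self]; exact hX.trans (Rout_le hg)) (he.of_mem_ropts hx)
    rwa [update_idem] at this
  · exact (Rout_le (mem_ropts_fextn_update_int.2 ⟨i, hij, g, hg, rfl⟩)).trans
      ((ih.update_ropts hT hg).lout_le_lout_of_le_rout j c hc
        (by rwa [update_of_ne (Ne.symm hij)]) (he.of_mem_ropts hx))

theorem rout_le_lout_of_le_lout (hf : MonotoneOn f (Set.univ.pi S)) (hT : Admissible S T)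
    (ih : TempoBoundsBelow S f T)
    (hPE : IsWT (fextn f T) false → (fextn f T).Rout ≤ (fextn f T).Lout)
    (hc : c ∈ S j) (hX : c ≤ (T j).Lout) (he : IsWT (fextn f T) false) :
    (fextn f (update T j (int c))).Rout ≤ (fextn f T).Lout := by
  rcases (hT.wt j).eq_int_or_opts_ne_nil with ⟨d, hd⟩ | ⟨hXL, _⟩
  · have := (fextn_update_int_mono hf hT.wt hT.valued hc (by simpa [hd] using hT.valued j)
      (by simpa [hd] using hX)).2
    rw [← hd, update_eq_self] at this
    exact this.trans (hPE he)
  · obtain ⟨l, hl, hEq⟩ := exists_Lout_eq hXL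
    have := (ih.update_lopts hT hl).rout_le_rout_of_le_rout j c hc
      (by rw [update_self, ← hEq]; exact hX) (he.of_mem_lopts (fextn_update_mem_lopts hl))
    rw [update_idem] at this
    exact this.trans (le_Lout (fextn_update_mem_lopts hl))

theorem rout_le_lout_fextn (hT : Admissible S T) (ih : TempoBoundsBelow S f T)
    (h : ∀ j c, c ∈ S j → (T j).Lout ≤ c → IsWT (fextn f T) false →
      (fextn f T).Rout ≤ (fextn f (update T j (int c))).Rout)
    (he : IsWT (fextn f T) false) : (fextn f T).Rout ≤ (fextn f T).Lout := by
  by_cases hint : ∀ i, (T i).isInt = true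
  · rw [fextn_of_forall_isInt hint, Lout_int, Rout_int]
  obtain ⟨j, hj⟩ : ∃ j, (T j).isInt = false := by simpa using hint
  obtain ⟨hXL, _⟩ := (hT.wt j).opts_ne_nil_of_isInt_eq_false hj
  obtain ⟨l, hl, hEq⟩ := exists_Lout_eq hXL
  have hc : (T j).Lout ∈ S j := ((hT.valued j).out_mem (hT.wt j)).1
  have := (ih.update_lopts hT hl).rout_le_rout_of_le_rout j _ hc (by rw [update_self, hEq])
    (he.of_mem_lopts (fextn_update_mem_lopts hl))
  rw [update_idem] at this
  exact (h j _ hc le_rfl he).trans (this.trans (le_Lout (fextn_update_mem_lopts hl)))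

theorem tempoBounds (hf : MonotoneOn f (Set.univ.pi S)) (T : Fin n → WT) (hT : Admissible S T) :
    TempoBounds S f T :=
  have ih : TempoBoundsBelow S f T := fun T' _ hT' => tempoBounds hf T' hT'
  have h₁ : ∀ j c, _ := fun j c hc => rout_le_rout_of_lout_le (j := j) (c := c) hf hT ih hc
  have hPE := rout_le_lout_fextn hT ih h₁
  { rout_le_rout_of_lout_le := h₁
    lout_le_lout_of_lout_le := fun _ _ => lout_le_lout_of_lout_le hT ih
    rout_le_lout_of_rout_le := fun _ _ => rout_le_lout_of_rout_le hf hT ih hPE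
    lout_le_lout_of_le_rout := fun _ _ => lout_le_lout_of_le_rout hf hT ih
    rout_le_rout_of_le_rout := fun _ _ => rout_le_rout_of_le_rout hT ih
    rout_le_lout_of_le_lout := fun _ _ => rout_le_lout_of_le_lout hf hT ih hPE
    rout_le_lout := hPE }
termination_by tupSize T

end Extension

end WT

/-- if f is order-preserving and each Gᵢ is Sᵢ-valued with gap₀(Gᵢ) = 0,
then gap₀(f̃(G₁,...,Gₙ)) = 0. -/
theorem fextn_gap (n : ℕ) (S : Fin n → Set ℤ) (f : (Fin n → ℤ) → ℤ)
    (hf : ∀ x y : Fin n → ℤ, (∀ i, x i ∈ S i) → (∀ i, y i ∈ S i) → (∀ i, x i ≤ y i) → f x ≤ f y)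
    (G : Fin n → WT) (hwt : ∀ i, (G i).Wt) (hv : ∀ i, (G i).Valued (S i))
    (hgap : ∀ i, (G i).gap false = ((0 : ℤ) : WithBot ℤ)) :
    (WT.fextn f G).gap false = ((0 : ℤ) : WithBot ℤ) := by
  have hmono : MonotoneOn f (Set.univ.pi S) := fun x hx y hy hxy =>
    hf x y (Set.mem_univ_pi.1 hx) (Set.mem_univ_pi.1 hy) hxy
  have hG : WT.Admissible S G := fun i =>
    ⟨⟨hwt i, fun _ => WT.rout_le_lout_of_gap_eq_zero (hwt i) (hgap i)⟩, hv i⟩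
  obtain ⟨m, hm⟩ := WT.exists_int_subgame_fextn (f := f) hwt
  refine WT.gap_eq_zero hm fun H hs he => ?_
  obtain ⟨U, hU, rfl⟩ := WT.exists_eq_fextn_of_subgame hs G rfl
  exact (WT.tempoBounds hmono U (hG.subgames hU)).rout_le_lout he
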